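/- Let r_e > 0, 0 < r_c < r_e, and ρ = r_c/r_e. For β ∈ (0, 2π) put A = (r_e, 0), B(β) = (r_e·cos β, r_e·sin β), and let P_UDE(β) denote the coverage proportion: the 1-dimensional Hausdorff measure of segment[A, B(β)] ∩ closedBall(0, r_c) divided by dist(A, B(β)). Then (1/(2π)) ∫₀^{2π} P_UDE(β) dβ = (1/(2π)) ∫_{π − 2·arcsin(ρ)}^{π + 2·arcsin(ρ)} √((r_c² − r_e²·γ(b)) / (r_e² − r_e²·γ(b))) db, where γ(b) = (1 + cos b)/2. (Proposition 2 of the paper: expected coverage proportion under uniformly distributed endpoints.) -/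

import Mathlib

/-!
Since `‖A‖ = ‖B‖`, the midpoint `m` of the chord `[A, B]` is orthogonal to `B - A`, so along the
chord `‖x‖² = ‖m‖² + ‖x - m‖²`. The chord therefore meets the disc of radius `r_c` in a segment of
length `2 √(r_c² - ‖m‖²)`, where the junk value `√t = 0` for `t < 0` accounts for chords missing
the disc. For the chord from angle `0` to angle `β` on the circle of radius `r_e` one has
`‖m‖² = r_e² γ(β)` and `dist A B = 2 √(r_e² - r_e² γ(β))`, which turns the coverage proportion into
the integrand. The integrand vanishes when `cos β ≥ 2ρ² - 1 = cos (π - 2 arcsin ρ)`, i.e. outside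
the window `[π - 2 arcsin ρ, π + 2 arcsin ρ]`.
-/

open Real MeasureTheory Metric Set

section Chord

variable {E : Type*} [NormedAddCommGroup E] [InnerProductSpace ℝ E]

theorem norm_lineMap_sq_of_norm_eq {A B : E} (h : ‖A‖ = ‖B‖) (t : ℝ) :
    ‖AffineMap.lineMap A B t‖ ^ 2 = ‖midpoint ℝ A B‖ ^ 2 + (t - 1 / 2) ^ 2 * dist A B ^ 2 := by
  have h' : inner ℝ A A = inner ℝ B B := by
    rw [real_inner_self_eq_norm_sq, real_inner_self_eq_norm_sq, h]
  simp only [AffineMap.lineMap_apply_module, midpoint_eq_smul_add, dist_eq_norm,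
    ← real_inner_self_eq_norm_sq, inner_add_left, inner_add_right, inner_smul_left,
    inner_smul_right, inner_sub_left, inner_sub_right, real_inner_comm A B, RCLike.conj_to_real,
    invOf_eq_inv]
  linear_combination (1 / 2 - t) * h'

theorem norm_midpoint_sq_of_norm_eq {A B : E} (h : ‖A‖ = ‖B‖) :
    ‖midpoint ℝ A B‖ ^ 2 = ‖A‖ ^ 2 - dist A B ^ 2 / 4 := by
  have := norm_lineMap_sq_of_norm_eq h 0
  rw [AffineMap.lineMap_apply_zero] at this
  linarith

theorem segment_inter_closedBall_eq_image {A B : E} {r : ℝ} (hAB : ‖A‖ = ‖B‖) (hne : A ≠ B)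
    (hrA : r ≤ ‖A‖) (hmr : ‖midpoint ℝ A B‖ ≤ r) :
    segment ℝ A B ∩ closedBall 0 r = AffineMap.lineMap A B ''
      Icc (1 / 2 - √(r ^ 2 - ‖midpoint ℝ A B‖ ^ 2) / dist A B)
        (1 / 2 + √(r ^ 2 - ‖midpoint ℝ A B‖ ^ 2) / dist A B) := by
  set K := √(r ^ 2 - ‖midpoint ℝ A B‖ ^ 2) / dist A B with hK
  have hd : 0 < dist A B := dist_pos.2 hne
  have hr : 0 ≤ r := (norm_nonneg _).trans hmr
  have hr2 : 0 ≤ r ^ 2 - ‖midpoint ℝ A B‖ ^ 2 :=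
    sub_nonneg.2 (pow_le_pow_left₀ (norm_nonneg _) hmr 2)
  have hnorm_le_iff (t : ℝ) : ‖AffineMap.lineMap A B t‖ ≤ r ↔ t ∈ Icc (1 / 2 - K) (1 / 2 + K) := by
    rw [← sq_le_sq₀ (norm_nonneg _) hr, norm_lineMap_sq_of_norm_eq hAB, ← mem_Icc_iff_abs_le,
      abs_sub_comm, hK, le_div_iff₀ hd, Real.le_sqrt (by positivity) hr2, mul_pow, sq_abs]
    constructor <;> intro <;> linarith
  have hK_le : K ≤ 1 / 2 := by
    rw [hK, div_le_iff₀ hd, Real.sqrt_le_left (by positivity), norm_midpoint_sq_of_norm_eq hAB]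
    nlinarith [(sq_le_sq₀ hr (norm_nonneg A)).2 hrA]
  rw [segment_eq_image_lineMap]
  ext x
  simp only [mem_inter_iff, mem_image, mem_closedBall_zero_iff]
  constructor
  · rintro ⟨⟨t, -, rfl⟩, hx⟩
    exact ⟨t, (hnorm_le_iff t).1 hx, rfl⟩
  · rintro ⟨t, ht, rfl⟩
    exact ⟨⟨t, ⟨by linarith [ht.1], by linarith [ht.2]⟩, rfl⟩, (hnorm_le_iff t).2 ht⟩

theorem hausdorffMeasure_segment_inter_closedBall [MeasurableSpace E] [BorelSpace E] {A B : E}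
    {r : ℝ} (hr : 0 ≤ r) (hAB : ‖A‖ = ‖B‖) (hrA : r ≤ ‖A‖) :
    μH[1] (segment ℝ A B ∩ closedBall 0 r) =
      ENNReal.ofReal (2 * √(r ^ 2 - ‖midpoint ℝ A B‖ ^ 2)) := by
  rcases eq_or_ne A B with rfl | hne
  · have hsq : r ^ 2 - ‖A‖ ^ 2 ≤ 0 := sub_nonpos.2 (pow_le_pow_left₀ hr hrA 2)
    rw [midpoint_self, Real.sqrt_eq_zero'.2 hsq, mul_zero, ENNReal.ofReal_zero]
    exact measure_mono_null inter_subset_left (by rw [hausdorffMeasure_segment, edist_self])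
  rcases lt_or_ge r ‖midpoint ℝ A B‖ with hmr | hmr
  · have hmr2 : r ^ 2 < ‖midpoint ℝ A B‖ ^ 2 := pow_lt_pow_left₀ hmr hr two_ne_zero
    have hempty : segment ℝ A B ∩ closedBall 0 r = ∅ := by
      rw [segment_eq_image_lineMap, eq_empty_iff_forall_notMem]
      rintro _ ⟨⟨t, -, rfl⟩, hx⟩
      have hx2 := pow_le_pow_left₀ (norm_nonneg _) (mem_closedBall_zero_iff.1 hx) 2
      rw [norm_lineMap_sq_of_norm_eq hAB] at hx2
      nlinarith [mul_nonneg (sq_nonneg (t - 1 / 2)) (sq_nonneg (dist A B))]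
    rw [hempty, measure_empty, Real.sqrt_eq_zero'.2 (by linarith), mul_zero, ENNReal.ofReal_zero]
  have hK_nonneg : 0 ≤ √(r ^ 2 - ‖midpoint ℝ A B‖ ^ 2) / dist A B := by positivity
  rw [segment_inter_closedBall_eq_image hAB hne hrA hmr, ← segment_eq_Icc (by linarith),
    image_segment, hausdorffMeasure_segment, edist_dist, dist_lineMap_lineMap, Real.dist_eq,
    show ∀ K : ℝ, 1 / 2 - K - (1 / 2 + K) = -(2 * K) from fun K => by ring,
    abs_neg, abs_of_nonneg (by positivity), mul_assoc, div_mul_cancel₀ _ (dist_ne_zero.2 hne)]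

end Chord

theorem norm_euclideanSpace_polar (R θ : ℝ) :
    ‖(EuclideanSpace.equiv (Fin 2) ℝ).symm ![R * cos θ, R * sin θ]‖ = |R| := by
  rw [EuclideanSpace.norm_eq, ← Real.sqrt_sq_eq_abs]
  congr 1
  simp only [Fin.sum_univ_two, PiLp.continuousLinearEquiv_symm_apply, Matrix.cons_val_zero,
    Matrix.cons_val_one, Matrix.cons_val_fin_one, Real.norm_eq_abs, sq_abs, mul_pow]
  linear_combination R ^ 2 * sin_sq_add_cos_sq θ

theorem dist_euclideanSpace_polar (R θ : ℝ) :
    dist ((EuclideanSpace.equiv (Fin 2) ℝ).symm ![R, 0])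
        ((EuclideanSpace.equiv (Fin 2) ℝ).symm ![R * cos θ, R * sin θ]) =
      2 * √(R ^ 2 - R ^ 2 * ((1 + cos θ) / 2)) := by
  rw [EuclideanSpace.dist_eq, show (2 : ℝ) = √(2 ^ 2) by simp, ← Real.sqrt_mul (by positivity)]
  congr 1
  simp only [Fin.sum_univ_two, PiLp.continuousLinearEquiv_symm_apply, Matrix.cons_val_zero,
    Matrix.cons_val_one, Matrix.cons_val_fin_one, Real.dist_eq, sq_abs]
  linear_combination R ^ 2 * sin_sq_add_cos_sq θ

theorem hausdorffMeasure_chord_inter_closedBall_div_dist {r_e r_c : ℝ} (hrc : 0 ≤ r_c)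
    (hce : r_c ≤ r_e) (θ : ℝ) :
    (μH[1] (segment ℝ ((EuclideanSpace.equiv (Fin 2) ℝ).symm ![r_e, 0])
          ((EuclideanSpace.equiv (Fin 2) ℝ).symm ![r_e * cos θ, r_e * sin θ]) ∩
        closedBall 0 r_c)).toReal /
      dist ((EuclideanSpace.equiv (Fin 2) ℝ).symm ![r_e, 0])
        ((EuclideanSpace.equiv (Fin 2) ℝ).symm ![r_e * cos θ, r_e * sin θ]) =
      √((r_c ^ 2 - r_e ^ 2 * ((1 + cos θ) / 2)) / (r_e ^ 2 - r_e ^ 2 * ((1 + cos θ) / 2))) := by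
  set A := (EuclideanSpace.equiv (Fin 2) ℝ).symm ![r_e, 0]
  set B := (EuclideanSpace.equiv (Fin 2) ℝ).symm ![r_e * cos θ, r_e * sin θ]
  have hre : 0 ≤ r_e := hrc.trans hce
  have hA : ‖A‖ = r_e := by
    simpa only [cos_zero, sin_zero, mul_one, mul_zero, abs_of_nonneg hre]
      using norm_euclideanSpace_polar r_e 0
  have hAB : ‖A‖ = ‖B‖ := by rw [hA, norm_euclideanSpace_polar, abs_of_nonneg hre]
  have hden : 0 ≤ r_e ^ 2 - r_e ^ 2 * ((1 + cos θ) / 2) := by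
    nlinarith [cos_le_one θ, sq_nonneg r_e]
  have hmid : ‖midpoint ℝ A B‖ ^ 2 = r_e ^ 2 * ((1 + cos θ) / 2) := by
    rw [norm_midpoint_sq_of_norm_eq hAB, hA, dist_euclideanSpace_polar, mul_pow, Real.sq_sqrt hden]
    ring
  rw [hausdorffMeasure_segment_inter_closedBall hrc hAB (hce.trans hA.ge),
    ENNReal.toReal_ofReal (by positivity), hmid, dist_euclideanSpace_polar, Real.sqrt_div' _ hden,
    mul_div_mul_left _ _ two_ne_zero]

theorem cos_le_cos_of_le_or_two_pi_sub_le {a x : ℝ} (ha : a ≤ π) (hx₀ : 0 ≤ x) (hx : x ≤ 2 * π)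
    (h : x ≤ a ∨ 2 * π - a ≤ x) : cos a ≤ cos x := by
  rcases h with h | h
  · exact cos_le_cos_of_nonneg_of_le_pi hx₀ ha h
  · rw [← cos_two_pi_sub x]
    exact cos_le_cos_of_nonneg_of_le_pi (by linarith) ha (by linarith)

theorem cos_pi_sub_two_mul_arcsin {x : ℝ} (h₁ : -1 ≤ x) (h₂ : x ≤ 1) :
    cos (π - 2 * arcsin x) = 2 * x ^ 2 - 1 := by
  rw [cos_pi_sub, cos_two_mul, cos_sq', sin_arcsin h₁ h₂]
  ring

theorem sqrt_chord_ratio_eq_zero_of_mem_sdiff {r_e r_c x : ℝ} (hre : 0 < r_e) (hrc : 0 ≤ r_c)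
    (hce : r_c ≤ r_e)
    (hx : x ∈ Ioc 0 (2 * π) \ Ioc (π - 2 * arcsin (r_c / r_e)) (π + 2 * arcsin (r_c / r_e))) :
    √((r_c ^ 2 - r_e ^ 2 * ((1 + cos x) / 2)) / (r_e ^ 2 - r_e ^ 2 * ((1 + cos x) / 2))) = 0 := by
  obtain ⟨⟨hx₀, hx₂⟩, hx⟩ := hx
  have hρ₀ : 0 ≤ r_c / r_e := div_nonneg hrc hre.le
  have hρ₁ : r_c / r_e ≤ 1 := (div_le_one hre).2 hce
  have harcsin : 0 ≤ arcsin (r_c / r_e) := arcsin_nonneg.2 hρ₀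
  have hcos : 2 * (r_c / r_e) ^ 2 - 1 ≤ cos x := by
    rw [← cos_pi_sub_two_mul_arcsin (by linarith) hρ₁]
    refine cos_le_cos_of_le_or_two_pi_sub_le (by linarith) hx₀.le hx₂ ?_
    rw [mem_Ioc, not_and_or, not_lt, not_le] at hx
    exact hx.imp_right fun h => by linarith
  have hnum : r_c ^ 2 ≤ (1 + cos x) / 2 * r_e ^ 2 := by
    rw [← div_le_iff₀ (by positivity), ← div_pow]
    linarith
  refine Real.sqrt_eq_zero'.2 (div_nonpos_of_nonpos_of_nonneg ?_ ?_)
  · linarith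
  · nlinarith [cos_le_one x, sq_nonneg r_e]

theorem intervalIntegral_eq_of_forall_sdiff_eq_zero {E : Type*} [NormedAddCommGroup E]
    [NormedSpace ℝ E] {f : ℝ → E} {a b c d : ℝ} (hac : a ≤ c) (hcd : c ≤ d) (hdb : d ≤ b)
    (hf : ∀ x ∈ Ioc a b \ Ioc c d, f x = 0) : ∫ x in a..b, f x = ∫ x in c..d, f x := by
  rw [intervalIntegral.integral_of_le (hac.trans (hcd.trans hdb)),
    intervalIntegral.integral_of_le hcd]
  exact setIntegral_eq_of_subset_of_forall_sdiff_eq_zero measurableSet_Ioc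
    (Ioc_subset_Ioc hac hdb) hf

/-- **Proposition 2 (expected coverage proportion, uniformly distributed endpoints).**
With one endpoint fixed at `A = (r_e, 0)` and the other at `B(β) = (r_e cos β, r_e sin β)`,
the average over `β` uniform on `[0, 2π]` of the coverage proportion `P_UDE(β)` equals
`(1/(2π)) ∫_{π−2 arcsin ρ}^{π+2 arcsin ρ} √((r_c² − r_e² γ(b))/(r_e² − r_e² γ(b))) db`,
where `γ(b) = (1+cos b)/2` and `ρ = r_c/r_e`. -/
theorem expected_coverage_UDE (r_e r_c ρ : ℝ) (hre : 0 < r_e) (hrc : 0 < r_c)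
    (hce : r_c < r_e) (hρ : ρ = r_c / r_e)
    (A : EuclideanSpace ℝ (Fin 2))
    (hA : A = (EuclideanSpace.equiv (Fin 2) ℝ).symm ![r_e, 0])
    (B : ℝ → EuclideanSpace ℝ (Fin 2))
    (hB : ∀ β, B β = (EuclideanSpace.equiv (Fin 2) ℝ).symm ![r_e * cos β, r_e * sin β])
    (P_UDE : ℝ → ℝ)
    (hP : ∀ β ∈ Set.Ioo (0 : ℝ) (2 * π),
      P_UDE β = (μH[1] (segment ℝ A (B β) ∩
          closedBall (0 : EuclideanSpace ℝ (Fin 2)) r_c)).toReal / dist A (B β))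
    (γ : ℝ → ℝ) (hγ : ∀ b, γ b = (1 + cos b) / 2) :
    (1 / (2 * π)) * ∫ β in (0 : ℝ)..(2 * π), P_UDE β =
      (1 / (2 * π)) * ∫ b in (π - 2 * arcsin ρ)..(π + 2 * arcsin ρ),
        Real.sqrt ((r_c ^ 2 - r_e ^ 2 * γ b) / (r_e ^ 2 - r_e ^ 2 * γ b)) := by
  subst hρ
  simp only [hγ]
  have harcsin₀ : 0 ≤ arcsin (r_c / r_e) := arcsin_nonneg.2 (div_nonneg hrc.le hre.le)
  have harcsin₁ : arcsin (r_c / r_e) ≤ π / 2 := arcsin_le_pi_div_two _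
  congr 1
  calc ∫ β in (0 : ℝ)..(2 * π), P_UDE β
      = ∫ β in (0 : ℝ)..(2 * π),
          √((r_c ^ 2 - r_e ^ 2 * ((1 + cos β) / 2)) / (r_e ^ 2 - r_e ^ 2 * ((1 + cos β) / 2))) := by
        refine intervalIntegral.integral_congr_ae ?_
        filter_upwards [Measure.ae_ne volume (2 * π)] with β hβ₂ hβ
        rw [uIoc_of_le two_pi_pos.le] at hβ
        rw [hP β ⟨hβ.1, hβ.2.lt_of_ne hβ₂⟩, hA, hB]
        exact hausdorffMeasure_chord_inter_closedBall_div_dist hrc.le hce.le β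
    _ = _ := intervalIntegral_eq_of_forall_sdiff_eq_zero (by linarith) (by linarith)
        (by linarith) fun x hx => sqrt_chord_ratio_eq_zero_of_mem_sdiff hre hrc.le hce.le hx
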